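/- For any orthonormal basis B of an octonion algebra over an algebraically closed field and any octonions a, b: ∑_{x∈B} (x·a)(x·b) = (1/2)⟨a,b⟩ ∑_{x∈B} xx, where uv denotes the symmetric operator z ↦ (1/2)(u⟨v,z⟩ + v⟨u,z⟩). -/

import Mathlib

/-- An octonion algebra over `k`: an 8-dimensional unital (not necessarily associative)
`k`-algebra with a nondegenerate multiplicative quadratic form `N`. -/
structure OctonionAlgebra (k : Type) [Field k] (A : Type) [AddCommGroup A] [Module k A] where
  mul : A → A → A
  e : A
  N : A → k
  add_mul' : ∀ a b c : A, mul (a + b) c = mul a c + mul b c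
  mul_add' : ∀ a b c : A, mul a (b + c) = mul a b + mul a c
  smul_mul' : ∀ (t : k) (a b : A), mul (t • a) b = t • mul a b
  mul_smul' : ∀ (t : k) (a b : A), mul a (t • b) = t • mul a b
  one_mul' : ∀ a : A, mul e a = a
  mul_one' : ∀ a : A, mul a e = a
  dim_eq : Module.finrank k A = 8
  N_smul : ∀ (t : k) (a : A), N (t • a) = t ^ 2 * N a
  polar_add_left : ∀ a b c : A,
    N (a + b + c) - N (a + b) - N c = (N (a + c) - N a - N c) + (N (b + c) - N b - N c)
  polar_smul_left : ∀ (t : k) (a b : A),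
    N (t • a + b) - N (t • a) - N b = t * (N (a + b) - N a - N b)
  nondeg : ∀ a : A, (∀ b : A, N (a + b) - N a - N b = 0) → a = 0
  N_mul : ∀ a b : A, N (mul a b) = N a * N b

namespace OctonionAlgebra

variable {k : Type} [Field k] {A : Type} [AddCommGroup A] [Module k A]

/-- The bilinear form associated to the norm: `⟨x,y⟩ = N(x+y) - N(x) - N(y)`. -/
def inner (O : OctonionAlgebra k A) (x y : A) : k := O.N (x + y) - O.N x - O.N y

/-- The standard involution `x̄ = ⟨x,e⟩e - x`. -/
def conj (O : OctonionAlgebra k A) (x : A) : A := O.inner x O.e • O.e - x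

/-- The Malcev product `a*b = ab - ba`. -/
def malcev (O : OctonionAlgebra k A) (a b : A) : A := O.mul a b - O.mul b a

/-- The associator `{a,x,b} = (ax)b - a(xb)`. -/
def assoc (O : OctonionAlgebra k A) (a x b : A) : A :=
  O.mul (O.mul a x) b - O.mul a (O.mul x b)

/-- The standard derivation `D_{a,b} = [L_a,L_b] + [L_a,R_b] + [R_a,R_b]`, as a function. -/
def D (O : OctonionAlgebra k A) (a b x : A) : A :=
  O.mul a (O.mul b x) - O.mul b (O.mul a x)
  + O.mul a (O.mul x b) - O.mul (O.mul a x) b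
  + O.mul (O.mul x b) a - O.mul (O.mul x a) b

end OctonionAlgebra

/-- The value at `z` of the symmetric operator `uv : z ↦ (1/2)(u⟨v,z⟩ + v⟨u,z⟩)`. -/
noncomputable def opval {k A : Type} [Field k] [AddCommGroup A] [Module k A]
    (O : OctonionAlgebra k A) (u v z : A) : A :=
  (2 : k)⁻¹ • (O.inner v z • u + O.inner u z • v)


/-! Right multiplication by `ȳ` is adjoint to right multiplication by `y`, so expanding in the
orthonormal basis gives `∑ᵢ ⟨bᵢy, z⟩ bᵢx = (zȳ)x`. Linearizing `(zx̄)x = N(x) z` yields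
`(zȳ)x + (zx̄)y = ⟨x,y⟩ z`, so the left-hand side is `½⟨x,y⟩ z`, while `∑ᵢ bᵢbᵢ` is the identity. -/

namespace OctonionAlgebra

variable {k A : Type} [Field k] [AddCommGroup A] [Module k A] (O : OctonionAlgebra k A)

theorem inner_comm (x y : A) : O.inner x y = O.inner y x := by
  simp only [inner, add_comm x y]
  ring

theorem inner_add_left (a b c : A) : O.inner (a + b) c = O.inner a c + O.inner b c :=
  O.polar_add_left a b c

theorem inner_smul_left (t : k) (a c : A) : O.inner (t • a) c = t * O.inner a c :=
  O.polar_smul_left t a c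

theorem inner_add_right (a b c : A) : O.inner a (b + c) = O.inner a b + O.inner a c := by
  rw [inner_comm, inner_add_left, inner_comm O b, inner_comm O c]

theorem inner_smul_right (t : k) (a c : A) : O.inner a (t • c) = t * O.inner a c := by
  rw [inner_comm, inner_smul_left, inner_comm]

def innerₗ : A →ₗ[k] A →ₗ[k] k :=
  LinearMap.mk₂ k O.inner O.inner_add_left O.inner_smul_left O.inner_add_right
    O.inner_smul_right

@[simp]
theorem innerₗ_apply (x y : A) : O.innerₗ x y = O.inner x y := rfl

theorem inner_sub_left (a b c : A) : O.inner (a - b) c = O.inner a c - O.inner b c :=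
  LinearMap.map_sub₂ O.innerₗ a b c

theorem inner_sub_right (a b c : A) : O.inner a (b - c) = O.inner a b - O.inner a c :=
  map_sub (O.innerₗ a) b c

theorem inner_self (x : A) : O.inner x x = 2 * O.N x := by
  simp only [inner, ← two_smul k x, O.N_smul]
  ring

theorem N_add (u v : A) : O.N (u + v) = O.N u + O.N v + O.inner u v := by
  rw [inner]
  ring

def mulRight (x : A) : A →ₗ[k] A where
  toFun u := O.mul u x
  map_add' a b := O.add_mul' a b x
  map_smul' t a := O.smul_mul' t a x

@[simp]
theorem mulRight_apply (x u : A) : O.mulRight x u = O.mul u x := rfl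

theorem mul_sub (a u v : A) : O.mul a (u - v) = O.mul a u - O.mul a v := by
  rw [sub_eq_add_neg, ← neg_one_smul k v, O.mul_add', O.mul_smul', neg_one_smul,
    ← sub_eq_add_neg]

theorem N_e_eq_one {a : A} (ha : O.N a ≠ 0) : O.N O.e = 1 := by
  have h := O.N_mul a O.e
  rw [O.mul_one'] at h
  exact (mul_eq_left₀ ha).mp h.symm

theorem inner_mul_right_mul_right (a c v : A) :
    O.inner (O.mul a v) (O.mul c v) = O.inner a c * O.N v := by
  simp only [inner, ← O.add_mul', O.N_mul]
  ring

theorem inner_mul_mul_add_inner_mul_mul (a c u v : A) :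
    O.inner (O.mul a u) (O.mul c v) + O.inner (O.mul a v) (O.mul c u)
      = O.inner a c * O.inner u v := by
  have h := O.inner_mul_right_mul_right a c (u + v)
  rw [O.mul_add', O.mul_add', O.inner_add_left, O.inner_add_right, O.inner_add_right,
    O.N_add, O.inner_mul_right_mul_right a c u, O.inner_mul_right_mul_right a c v] at h
  linear_combination h

theorem inner_mul_left_eq_inner_mul_conj (z y u : A) :
    O.inner (O.mul z y) u = O.inner z (O.mul u (O.conj y)) := by
  have h := O.inner_mul_mul_add_inner_mul_mul z u y O.e
  rw [O.mul_one', O.mul_one'] at h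
  rw [conj, O.mul_sub, O.mul_smul', O.mul_one', O.inner_sub_right, O.inner_smul_right]
  linear_combination h

theorem conj_add (x y : A) : O.conj (x + y) = O.conj x + O.conj y := by
  simp only [conj, O.inner_add_left, add_smul]
  abel

theorem N_conj (hNe : O.N O.e = 1) (x : A) : O.N (O.conj x) = O.N x := by
  rw [conj, sub_eq_add_neg, ← neg_one_smul k x, O.N_add, O.N_smul, O.N_smul,
    O.inner_smul_left, O.inner_smul_right, O.inner_comm x O.e, hNe]
  ring

theorem mul_conj_mul (hNe : O.N O.e = 1) (z x : A) :
    O.mul (O.mul z (O.conj x)) x = O.N x • z := by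
  refine sub_eq_zero.mp (O.nondeg _ fun u => ?_)
  change O.inner _ u = 0
  rw [O.inner_sub_left, O.inner_mul_left_eq_inner_mul_conj, O.inner_mul_right_mul_right,
    O.N_conj hNe, O.inner_smul_left]
  ring

theorem mul_conj_mul_add_mul_conj_mul (hNe : O.N O.e = 1) (z x y : A) :
    O.mul (O.mul z (O.conj y)) x + O.mul (O.mul z (O.conj x)) y = O.inner x y • z := by
  have h := O.mul_conj_mul hNe z (x + y)
  simp only [O.conj_add, O.mul_add', O.add_mul', O.mul_conj_mul hNe, O.N_add, add_smul] at h
  linear_combination (norm := module) h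

theorem eq_of_inner_eq {w w' : A} (h : ∀ u, O.inner w u = O.inner w' u) : w = w' :=
  sub_eq_zero.mp (O.nondeg _ fun u => (O.inner_sub_left w w' u).trans (sub_eq_zero.mpr (h u)))

section OrthonormalBasis

variable {ι : Type} [Fintype ι] [DecidableEq ι] {b : ι → A}
  (horth : ∀ i j, O.inner (b i) (b j) = if i = j then 1 else 0)
  (hspan : ∀ x : A, x ∈ Submodule.span k (Set.range b))
include horth hspan

theorem sum_inner_smul_eq (w : A) : ∑ i, O.inner (b i) w • b i = w := by
  have hspan' : Submodule.span k (Set.range b) = ⊤ := eq_top_iff.mpr fun x _ => hspan x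
  refine O.eq_of_inner_eq fun u => ?_
  show O.innerₗ _ u = O.innerₗ w u
  congr 1
  refine LinearMap.ext_on_range hspan' fun j => ?_
  simp [map_sum, O.inner_comm _ (b j), horth]

theorem sum_inner_mul_smul_mul (x y z : A) :
    ∑ i, O.inner (O.mul (b i) y) z • O.mul (b i) x = O.mul (O.mul z (O.conj y)) x := by
  calc ∑ i, O.inner (O.mul (b i) y) z • O.mul (b i) x
      = O.mulRight x (∑ i, O.inner (b i) (O.mul z (O.conj y)) • b i) := by
        simp [map_sum, O.inner_mul_left_eq_inner_mul_conj]
    _ = O.mul (O.mul z (O.conj y)) x := by rw [O.sum_inner_smul_eq horth hspan]; rfl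

theorem sum_opval_self (h2 : (2 : k) ≠ 0) (z : A) : ∑ i, opval O (b i) (b i) z = z := by
  simp only [opval, ← Finset.smul_sum, Finset.sum_add_distrib, O.sum_inner_smul_eq horth hspan,
    ← two_smul k z, smul_smul, inv_mul_cancel₀ h2, one_smul]

theorem sum_opval_mul_mul (hNe : O.N O.e = 1) (x y z : A) :
    ∑ i, opval O (O.mul (b i) x) (O.mul (b i) y) z = (2⁻¹ * O.inner x y) • z := by
  simp only [opval, ← Finset.smul_sum, Finset.sum_add_distrib,
    O.sum_inner_mul_smul_mul horth hspan, O.mul_conj_mul_add_mul_conj_mul hNe, smul_smul]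

end OrthonormalBasis

end OctonionAlgebra

theorem stmt12_general {k A : Type} [Field k] [AddCommGroup A] [Module k A]
    (O : OctonionAlgebra k A)
    (b : Fin 8 → A)
    (horth : ∀ i j, O.inner (b i) (b j) = if i = j then 1 else 0)
    (hspan : ∀ x : A, x ∈ Submodule.span k (Set.range b))
    (x y : A) :
    ∀ z : A,
      ∑ i : Fin 8, opval O (O.mul (b i) x) (O.mul (b i) y) z
        = ((2 : k)⁻¹ * O.inner x y) • (∑ i : Fin 8, opval O (b i) (b i) z) := by
  intro z
  have hN : (2 : k) * O.N (b 0) = 1 := by rw [← O.inner_self, horth, if_pos rfl]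
  have hNe : O.N O.e = 1 := O.N_e_eq_one (right_ne_zero_of_mul_eq_one hN)
  rw [O.sum_opval_mul_mul horth hspan hNe,
    O.sum_opval_self horth hspan (left_ne_zero_of_mul_eq_one hN)]

/-- For any orthonormal basis `B` of an octonion algebra over an algebraically closed
field and any octonions `a, b`:
`∑_{x∈B} (x·a)(x·b) = (1/2)⟨a,b⟩ ∑_{x∈B} xx` as symmetric operators. -/
theorem stmt12 {k A : Type} [Field k] [IsAlgClosed k] [AddCommGroup A] [Module k A]
    (h2 : (2 : k) ≠ 0) (O : OctonionAlgebra k A)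
    (b : Fin 8 → A)
    (horth : ∀ i j, O.inner (b i) (b j) = if i = j then 1 else 0)
    (hspan : ∀ x : A, x ∈ Submodule.span k (Set.range b))
    (x y : A) :
    ∀ z : A,
      ∑ i : Fin 8, opval O (O.mul (b i) x) (O.mul (b i) y) z
        = ((2 : k)⁻¹ * O.inner x y) • (∑ i : Fin 8, opval O (b i) (b i) z) :=
  stmt12_general O b horth hspan x y
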